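/- arXiv:2409.04146 — 6 statements merged into one kernel-verified Lean document; each statement's English description precedes it below -/
import Mathlib

section
/- Let d_1, …, d_{n-1} > 0 and z_1, …, z_{n-1} ∈ ℝ. Set m = ⌊(n+1)/2⌋ and let T(z) be the m × (n−m) matrix whose (⌈(i+1)/2⌉, ⌈i/2⌉) entry is d_i z_i for i = 1, …, n−1 and all other entries zero. Define μ ∈ ℝ^m by μ_1 = 1, μ_{k+1} = ∏_{j=1}^{k} d_{2j−1}/d_{2j}, and ν ∈ ℝ^{n−m} by ν_1 = 1, ν_{k+1} = ∏_{j=1}^{k} d_{2j}/d_{2j+1}. Then μ^t T(z) ν = d_1 (z_1 + z_2 + ⋯ + z_{n-1}). -/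
/-!
The bilinear form `μᵀ T ν` is a sum over the `n - 1` nonzero entries of `T`, the `i`-th one,
`dᵢ zᵢ`, being weighted by the product of the matching coordinates of `μ` and `ν`. Moving from
entry `i` to entry `i + 1` multiplies that product by `dᵢ / dᵢ₊₁`, so every entry contributes
`d₁ zᵢ`.
-/

open Matrix

namespace Matrix

variable {R : Type*} [NonUnitalCommSemiring R] {m p ι : Type*} [Fintype m] [Fintype p]
  [DecidableEq m] [DecidableEq p]

theorem dotProduct_sum_single_mulVec (s : Finset ι) (row : ι → m) (col : ι → p) (a : ι → R)
    (u : m → R) (v : p → R) :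
    u ⬝ᵥ (∑ i ∈ s, single (row i) (col i) (a i)) *ᵥ v = ∑ i ∈ s, u (row i) * a i * v (col i) := by
  rw [sum_mulVec, dotProduct_sum]
  refine Finset.sum_congr rfl fun i _ => ?_
  rw [single_mulVec, ← Pi.single, dotProduct_single, mul_assoc]

end Matrix

-- Entry `i = k + 1` of `T` sits at `(⌈(i+1)/2⌉, ⌈i/2⌉)` in the paper's 1-indexed notation.
def entryRow (n : ℕ) (k : Fin (n - 1)) : Fin ((n + 1) / 2) := ⟨(k + 1) / 2, by omega⟩

def entryCol (n : ℕ) (k : Fin (n - 1)) : Fin (n - (n + 1) / 2) := ⟨k / 2, by omega⟩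

theorem of_bidiagonal_eq_sum_single {R : Type*} [AddCommMonoid R] (n : ℕ) (a : ℕ → R) :
    Matrix.of (fun (r : Fin ((n + 1) / 2)) (c : Fin (n - (n + 1) / 2)) =>
      if (r : ℕ) = c then a (2 * c + 1) else if (r : ℕ) = c + 1 then a (2 * c + 2) else 0) =
      ∑ k : Fin (n - 1), single (entryRow n k) (entryCol n k) (a (k + 1)) := by
  ext r c
  simp only [of_apply, Matrix.sum_apply, single_apply, Fin.ext_iff, entryRow, entryCol]
  split_ifs with hdiag hsub
  · rw [Fintype.sum_eq_single ⟨2 * c, by omega⟩]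
    · rw [if_pos (by dsimp only; omega)]
    · intro k hk
      rw [if_neg]
      simp only [ne_eq, Fin.ext_iff] at hk
      omega
  · rw [Fintype.sum_eq_single ⟨2 * c + 1, by omega⟩]
    · rw [if_pos (by dsimp only; omega)]
    · intro k hk
      rw [if_neg]
      simp only [ne_eq, Fin.ext_iff] at hk
      omega
  · exact (Finset.sum_eq_zero fun k _ => if_neg (by omega)).symm

theorem prod_odd_div_even_mul_prod_even_div_odd_mul_eq {K : Type*} [Field K] (d : ℕ → K) (k : ℕ)
    (hd : ∀ i, 1 ≤ i → i ≤ k + 1 → d i ≠ 0) :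
    (∏ j ∈ Finset.range ((k + 1) / 2), d (2 * j + 1) / d (2 * j + 2)) *
      (∏ j ∈ Finset.range (k / 2), d (2 * j + 2) / d (2 * j + 3)) * d (k + 1) = d 1 := by
  induction k with
  | zero => simp
  | succ k ih =>
    have ih := ih fun i h1 h2 => hd i h1 (by omega)
    have hk : d (k + 1 + 1) ≠ 0 := hd _ (by omega) le_rfl
    rw [← ih]
    obtain ⟨c, rfl | rfl⟩ := Nat.even_or_odd' k
    · rw [show (2 * c + 1 + 1) / 2 = c + 1 by omega, show (2 * c + 1) / 2 = c by omega,
        show 2 * c / 2 = c by omega, Finset.prod_range_succ]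
      field_simp
    · rw [show (2 * c + 1 + 1 + 1) / 2 = c + 1 by omega, show (2 * c + 1 + 1) / 2 = c + 1 by omega,
        show (2 * c + 1) / 2 = c by omega,
        Finset.prod_range_succ fun j => d (2 * j + 2) / d (2 * j + 3)]
      field_simp

theorem sum_Icc_one_eq_sum_fin {M : Type*} [AddCommMonoid M] (n : ℕ) (f : ℕ → M) :
    ∑ i ∈ Finset.Icc 1 (n - 1), f i = ∑ k : Fin (n - 1), f (k + 1) := by
  rw [Fin.sum_univ_eq_sum_range (fun k => f (k + 1)), Finset.range_eq_Ico, Finset.sum_Ico_add',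
    zero_add, Finset.Ico_add_one_right_eq_Icc]

theorem mu_T_nu_eq_general {n : ℕ} (d z : ℕ → ℝ)
    (hd : ∀ i, 1 ≤ i → i ≤ n - 1 → 0 < d i)
    (T : Matrix (Fin ((n + 1) / 2)) (Fin (n - (n + 1) / 2)) ℝ)
    (hT : T = Matrix.of fun (r : Fin ((n + 1) / 2)) (c : Fin (n - (n + 1) / 2)) =>
      if (r : ℕ) = (c : ℕ) then d (2 * (c : ℕ) + 1) * z (2 * (c : ℕ) + 1)
      else if (r : ℕ) = (c : ℕ) + 1 then d (2 * (c : ℕ) + 2) * z (2 * (c : ℕ) + 2)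
      else 0)
    (mu : Fin ((n + 1) / 2) → ℝ)
    (hmu : mu = fun (k : Fin ((n + 1) / 2)) =>
      ∏ j ∈ Finset.range (k : ℕ), d (2 * j + 1) / d (2 * j + 2))
    (nu : Fin (n - (n + 1) / 2) → ℝ)
    (hnu : nu = fun (k : Fin (n - (n + 1) / 2)) =>
      ∏ j ∈ Finset.range (k : ℕ), d (2 * j + 2) / d (2 * j + 3)) :
    mu ⬝ᵥ T.mulVec nu = d 1 * ∑ i ∈ Finset.Icc 1 (n - 1), z i := by
  subst hT hmu hnu
  rw [of_bidiagonal_eq_sum_single n (fun i => d i * z i), dotProduct_sum_single_mulVec,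
    sum_Icc_one_eq_sum_fin, Finset.mul_sum]
  refine Finset.sum_congr rfl fun k _ => ?_
  have hweight := prod_odd_div_even_mul_prod_even_div_odd_mul_eq d k
    fun i h1 h2 => (hd i h1 (by omega)).ne'
  simp only [entryRow, entryCol]
  linear_combination z (k + 1) * hweight

/-- `μᵀ T(z) ν = d₁ (z₁ + ⋯ + z_{n-1})`, where `T(z)` is the lower bidiagonal
`⌊(n+1)/2⌋ × ⌊n/2⌋` matrix with diagonal `d₁z₁, d₃z₃, …` and subdiagonal `d₂z₂, d₄z₄, …`,
and `μ, ν` are the vectors of products of weight ratios. (All data is 1-indexed.) -/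
theorem mu_T_nu_eq {n : ℕ} (hn : 2 ≤ n) (d z : ℕ → ℝ)
    (hd : ∀ i, 1 ≤ i → i ≤ n - 1 → 0 < d i)
    (T : Matrix (Fin ((n + 1) / 2)) (Fin (n - (n + 1) / 2)) ℝ)
    (hT : T = Matrix.of fun (r : Fin ((n + 1) / 2)) (c : Fin (n - (n + 1) / 2)) =>
      if (r : ℕ) = (c : ℕ) then d (2 * (c : ℕ) + 1) * z (2 * (c : ℕ) + 1)
      else if (r : ℕ) = (c : ℕ) + 1 then d (2 * (c : ℕ) + 2) * z (2 * (c : ℕ) + 2)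
      else 0)
    (mu : Fin ((n + 1) / 2) → ℝ)
    (hmu : mu = fun (k : Fin ((n + 1) / 2)) =>
      ∏ j ∈ Finset.range (k : ℕ), d (2 * j + 1) / d (2 * j + 2))
    (nu : Fin (n - (n + 1) / 2) → ℝ)
    (hnu : nu = fun (k : Fin (n - (n + 1) / 2)) =>
      ∏ j ∈ Finset.range (k : ℕ), d (2 * j + 2) / d (2 * j + 3)) :
    mu ⬝ᵥ T.mulVec nu = d 1 * ∑ i ∈ Finset.Icc 1 (n - 1), z i :=
  mu_T_nu_eq_general d z hd T hT mu hmu nu hnu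
end

section
/- Let d_1, …, d_{n-1} > 0 with n ≥ 4, and let 1 < p < n−1. Define μ-type norms: for a tuple f = (f_1, …, f_k) of positive reals, set μ(f) to be the vector with entries μ(f)_1 = 1 and μ(f)_{j+1} = ∏_{i=1}^{j} f_{2i−1}/f_{2i} (for 2j ≤ k), and ν(f) with ν(f)_1 = 1 and ν(f)_{j+1} = ∏_{i=1}^{j} f_{2i}/f_{2i+1} (for 2j+1 ≤ k). Let d = (d_1, …, d_{n-1}), f_1 = (d_1, …, d_{p-1}), f_2 = (d_{p+1}, …, d_{n-1}). Then ‖μ(d)‖·‖ν(d)‖/d_1 ≥ ‖μ(f_1)‖·‖ν(f_1)‖/d_1 + ‖μ(f_2)‖·‖ν(f_2)‖/d_{p+1}. -/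
/-- The Euclidean norm of the vector `μ(f)` associated to a tuple `f₁, …, f_k` of
weights (`f` is 1-indexed): `μ(f)₁ = 1`, `μ(f)_{j+1} = ∏_{i=1}^{j} f_{2i-1}/f_{2i}`. -/
noncomputable def muNorm (k : ℕ) (f : ℕ → ℝ) : ℝ :=
  Real.sqrt (∑ j ∈ Finset.range ((k + 2) / 2),
    (∏ i ∈ Finset.range j, f (2 * i + 1) / f (2 * i + 2)) ^ 2)

/-- The Euclidean norm of the vector `ν(f)` associated to a tuple `f₁, …, f_k` of
weights (`f` is 1-indexed): `ν(f)₁ = 1`, `ν(f)_{j+1} = ∏_{i=1}^{j} f_{2i}/f_{2i+1}`. -/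
noncomputable def nuNorm (k : ℕ) (f : ℕ → ℝ) : ℝ :=
  Real.sqrt (∑ j ∈ Finset.range ((k + 1) / 2),
    (∏ i ∈ Finset.range j, f (2 * i + 2) / f (2 * i + 3)) ^ 2)

/-! Both `μ(d)` and `ν(d)` are vectors of partial products of consecutive ratios. Splitting `d` at
`d_p` splits each of them into its entries before `p`, which form `μ(f₁)` resp. `ν(f₁)`, and a tail
which is a scalar multiple of `μ(f₂)` or `ν(f₂)` (which one depends on the parity of `p`). The two
scalars telescope to `d₁ / d_{p+1}`, and Cauchy–Schwarz in `ℝ²` finishes the proof. -/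

open Finset

-- `ratioProd f j` is the entry `μ(f)_{j+1}`, and `ratioProd (fun i => f (1 + i)) j` is `ν(f)_{j+1}`.
noncomputable def ratioProd (f : ℕ → ℝ) (j : ℕ) : ℝ :=
  ∏ i ∈ range j, f (2 * i + 1) / f (2 * i + 2)

lemma ratioProd_add (f : ℕ → ℝ) (m j : ℕ) :
    ratioProd f (m + j) = ratioProd f m * ratioProd (fun i => f (2 * m + i)) j := by
  unfold ratioProd
  rw [prod_range_add]
  congr 1
  refine prod_congr rfl fun i _ => ?_
  rw [show 2 * (m + i) + 1 = 2 * m + (2 * i + 1) by ring,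
    show 2 * (m + i) + 2 = 2 * m + (2 * i + 2) by ring]

lemma sum_sq_ratioProd_add (f : ℕ → ℝ) (m N : ℕ) :
    ∑ j ∈ range (m + N), ratioProd f j ^ 2 = ∑ j ∈ range m, ratioProd f j ^ 2
      + ratioProd f m ^ 2 * ∑ j ∈ range N, ratioProd (fun i => f (2 * m + i)) j ^ 2 := by
  simp only [sum_range_add, ratioProd_add, mul_pow, mul_sum]

lemma ratioProd_shift_one (f : ℕ → ℝ) (j : ℕ) :
    ratioProd (fun i => f (1 + i)) j = ∏ i ∈ range j, f (2 * i + 2) / f (2 * i + 3) := by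
  unfold ratioProd
  refine prod_congr rfl fun i _ => ?_
  dsimp only
  rw [show 1 + (2 * i + 1) = 2 * i + 2 by ring, show 1 + (2 * i + 2) = 2 * i + 3 by ring]

lemma muNorm_sq (k : ℕ) (f : ℕ → ℝ) :
    muNorm k f ^ 2 = ∑ j ∈ range ((k + 2) / 2), ratioProd f j ^ 2 :=
  Real.sq_sqrt (by positivity)

lemma nuNorm_sq (k : ℕ) (f : ℕ → ℝ) :
    nuNorm k f ^ 2 = ∑ j ∈ range ((k + 1) / 2), ratioProd (fun i => f (1 + i)) j ^ 2 := by
  simp only [nuNorm, ratioProd_shift_one]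
  exact Real.sq_sqrt (by positivity)

lemma muNorm_nonneg (k : ℕ) (f : ℕ → ℝ) : 0 ≤ muNorm k f := Real.sqrt_nonneg _

lemma nuNorm_nonneg (k : ℕ) (f : ℕ → ℝ) : 0 ≤ nuNorm k f := Real.sqrt_nonneg _

lemma shift_shift (f : ℕ → ℝ) (s t : ℕ) :
    (fun i => (fun i => f (s + i)) (t + i)) = fun i => f (s + t + i) := by
  simp only [add_assoc]

lemma muNorm_sq_split_even (f : ℕ → ℝ) {k m : ℕ} (hm : 1 ≤ m) (hk : 2 * m ≤ k) :
    muNorm k f ^ 2 = muNorm (2 * m - 1) f ^ 2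
      + ratioProd f m ^ 2 * muNorm (k - 2 * m) (fun i => f (2 * m + i)) ^ 2 := by
  rw [muNorm_sq, muNorm_sq, muNorm_sq, show (k + 2) / 2 = m + (k - 2 * m + 2) / 2 by omega,
    show (2 * m - 1 + 2) / 2 = m by omega, sum_sq_ratioProd_add]

lemma nuNorm_sq_split_even (f : ℕ → ℝ) {k m : ℕ} (hk : 2 * m ≤ k) :
    nuNorm k f ^ 2 = nuNorm (2 * m - 1) f ^ 2
      + ratioProd (fun i => f (1 + i)) m ^ 2 * nuNorm (k - 2 * m) (fun i => f (2 * m + i)) ^ 2 := by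
  rw [nuNorm_sq, nuNorm_sq, nuNorm_sq, show (k + 1) / 2 = m + (k - 2 * m + 1) / 2 by omega,
    show (2 * m - 1 + 1) / 2 = m by omega, sum_sq_ratioProd_add, shift_shift, shift_shift,
    add_comm 1 (2 * m)]

lemma muNorm_sq_split_odd (f : ℕ → ℝ) {k m : ℕ} (hk : 2 * m + 1 ≤ k) :
    muNorm k f ^ 2 = muNorm (2 * m) f ^ 2
      + ratioProd f (m + 1) ^ 2 * nuNorm (k - (2 * m + 1)) (fun i => f (2 * m + 1 + i)) ^ 2 := by
  rw [muNorm_sq, muNorm_sq, nuNorm_sq,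
    show (k + 2) / 2 = (m + 1) + (k - (2 * m + 1) + 1) / 2 by omega,
    show (2 * m + 2) / 2 = m + 1 by omega, sum_sq_ratioProd_add, shift_shift,
    show 2 * (m + 1) = 2 * m + 1 + 1 by ring]

lemma nuNorm_sq_split_odd (f : ℕ → ℝ) {k m : ℕ} (hk : 2 * m + 1 ≤ k) :
    nuNorm k f ^ 2 = nuNorm (2 * m) f ^ 2
      + ratioProd (fun i => f (1 + i)) m ^ 2
        * muNorm (k - (2 * m + 1)) (fun i => f (2 * m + 1 + i)) ^ 2 := by
  rw [nuNorm_sq, nuNorm_sq, muNorm_sq,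
    show (k + 1) / 2 = m + (k - (2 * m + 1) + 2) / 2 by omega,
    show (2 * m + 1) / 2 = m by omega, sum_sq_ratioProd_add, shift_shift, add_comm 1 (2 * m)]

lemma ratioProd_mul_ratioProd_shift_one (f : ℕ → ℝ) (m : ℕ)
    (hf : ∀ i, 1 ≤ i → i ≤ 2 * m + 1 → f i ≠ 0) :
    ratioProd f m * ratioProd (fun i => f (1 + i)) m = f 1 / f (2 * m + 1) := by
  induction m with
  | zero => simp [ratioProd, div_self (hf 1 le_rfl le_rfl)]
  | succ m ih =>
    have h₁ := hf (2 * m + 1) (by omega) (by omega)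
    have h₂ := hf (2 * m + 2) (by omega) (by omega)
    rw [ratioProd, prod_range_succ, ← ratioProd, ratioProd_shift_one, prod_range_succ,
      ← ratioProd_shift_one, mul_mul_mul_comm, ih fun i h1 h2 => hf i h1 (by omega),
      show 2 * (m + 1) + 1 = 2 * m + 3 by ring]
    field_simp

lemma ratioProd_succ_mul_ratioProd_shift_one (f : ℕ → ℝ) (m : ℕ)
    (hf : ∀ i, 1 ≤ i → i ≤ 2 * m + 2 → f i ≠ 0) :
    ratioProd f (m + 1) * ratioProd (fun i => f (1 + i)) m = f 1 / f (2 * m + 2) := by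
  have h := hf (2 * m + 1) (by omega) (by omega)
  rw [ratioProd, prod_range_succ, ← ratioProd, mul_right_comm,
    ratioProd_mul_ratioProd_shift_one f m fun i h1 h2 => hf i h1 (by omega)]
  field_simp

lemma mul_add_mul_le_mul_of_sq_eq {x y x₁ y₁ x₂ y₂ a b : ℝ} (hx : 0 ≤ x) (hy : 0 ≤ y)
    (hx' : x ^ 2 = x₁ ^ 2 + a ^ 2 * x₂ ^ 2) (hy' : y ^ 2 = y₁ ^ 2 + b ^ 2 * y₂ ^ 2) :
    x₁ * y₁ + a * b * (x₂ * y₂) ≤ x * y := by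
  refine le_of_abs_le (abs_le_of_sq_le_sq ?_ (mul_nonneg hx hy))
  rw [mul_pow, hx', hy']
  nlinarith [sq_nonneg (x₁ * (b * y₂) - a * x₂ * y₁)]

lemma div_add_div_le_of_sq_eq {x y x₁ y₁ x₂ y₂ a b c c' : ℝ} (hx : 0 ≤ x) (hy : 0 ≤ y)
    (hc : 0 < c) (hx' : x ^ 2 = x₁ ^ 2 + a ^ 2 * x₂ ^ 2) (hy' : y ^ 2 = y₁ ^ 2 + b ^ 2 * y₂ ^ 2)
    (hab : a * b = c / c') :
    x₁ * y₁ / c + x₂ * y₂ / c' ≤ x * y / c := by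
  have key := mul_add_mul_le_mul_of_sq_eq hx hy hx' hy'
  rw [hab] at key
  calc x₁ * y₁ / c + x₂ * y₂ / c' = (x₁ * y₁ + c / c' * (x₂ * y₂)) / c := by
        field_simp
    _ ≤ x * y / c := by gcongr

theorem splitting_inequality_general {n : ℕ} (d : ℕ → ℝ)
    (hd : ∀ i, 1 ≤ i → i ≤ n - 1 → 0 < d i)
    (p : ℕ) (hp1 : 1 < p) (hp2 : p < n - 1) :
    muNorm (p - 1) d * nuNorm (p - 1) d / d 1
        + muNorm (n - 1 - p) (fun i => d (p + i)) * nuNorm (n - 1 - p) (fun i => d (p + i))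
          / d (p + 1)
      ≤ muNorm (n - 1) d * nuNorm (n - 1) d / d 1 := by
  have hd₁ : 0 < d 1 := hd 1 le_rfl (by omega)
  have hd₀ : ∀ i, 1 ≤ i → i ≤ p + 1 → d i ≠ 0 := fun i h₁ h₂ => (hd i h₁ (by omega)).ne'
  obtain ⟨m, rfl | rfl⟩ := Nat.even_or_odd' p
  · exact div_add_div_le_of_sq_eq (muNorm_nonneg _ _) (nuNorm_nonneg _ _) hd₁
      (muNorm_sq_split_even d (by omega) (by omega)) (nuNorm_sq_split_even d (by omega))
      (ratioProd_mul_ratioProd_shift_one d m hd₀)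
  · rw [Nat.add_sub_cancel, mul_comm (muNorm (n - 1 - (2 * m + 1)) _)]
    exact div_add_div_le_of_sq_eq (muNorm_nonneg _ _) (nuNorm_nonneg _ _) hd₁
      (muNorm_sq_split_odd d (by omega)) (nuNorm_sq_split_odd d (by omega))
      (ratioProd_succ_mul_ratioProd_shift_one d m hd₀)

/-- Splitting a path at an interior weight `d_p` does not increase the distance value:
`‖μ(d)‖‖ν(d)‖/d₁ ≥ ‖μ(f₁)‖‖ν(f₁)‖/d₁ + ‖μ(f₂)‖‖ν(f₂)‖/d_{p+1}`, where
`f₁ = (d₁, …, d_{p-1})` and `f₂ = (d_{p+1}, …, d_{n-1})`. -/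
theorem splitting_inequality {n : ℕ} (hn : 4 ≤ n) (d : ℕ → ℝ)
    (hd : ∀ i, 1 ≤ i → i ≤ n - 1 → 0 < d i)
    (p : ℕ) (hp1 : 1 < p) (hp2 : p < n - 1) :
    muNorm (p - 1) d * nuNorm (p - 1) d / d 1
        + muNorm (n - 1 - p) (fun i => d (p + i)) * nuNorm (n - 1 - p) (fun i => d (p + i))
          / d (p + 1)
      ≤ muNorm (n - 1) d * nuNorm (n - 1) d / d 1 :=
  splitting_inequality_general d hd p hp1 hp2
end

section
/- For n = 3 and d_1, d_2 > 0, let D ∈ M_3(ℝ) be the symmetric tridiagonal matrix with zero diagonal and superdiagonal (d_1, d_2). Then max{a_1 − a_3 : A = diag(a_1,a_2,a_3), ‖AD − DA‖ ≤ 1} = (1/d_1)·√(1 + (d_1/d_2)²) = √(d_1² + d_2²)/(d_1 d_2), and the maximum is attained at z = (z_1, z_2) = (d_2/(d_1√(d_1²+d_2²)), d_1/(d_2√(d_1²+d_2²))), i.e. a_1 − a_2 = z_1, a_2 − a_3 = z_2. -/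
/-!
Writing `x = (a₁ - a₂) d₁` and `y = (a₂ - a₃) d₂`, the commutator `AD - DA` is the real skew
matrix with superdiagonal `(x, y)`, whose operator norm is `√(x² + y²)`. So the constraint is
`x² + y² ≤ 1`, and `a₁ - a₃ = x / d₁ + y / d₂ ≤ √(d₁⁻² + d₂⁻²)` by Cauchy–Schwarz, with equality
when `(x, y)` is the unit vector along `(d₁⁻¹, d₂⁻¹)`, i.e. `(x, y) = (d₂, d₁) / √(d₁² + d₂²)`.
-/

open Matrix
open scoped Matrix.Norms.L2Operator

theorem diagonal_mul_sub_mul_diagonal_path3 {R : Type*} [CommRing R] (a : Fin 3 → R) (x y : R) :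
    diagonal a * !![0, x, 0; x, 0, y; 0, y, 0] - !![0, x, 0; x, 0, y; 0, y, 0] * diagonal a =
      !![0, (a 0 - a 1) * x, 0;
        -((a 0 - a 1) * x), 0, (a 1 - a 2) * y;
        0, -((a 1 - a 2) * y), 0] := by
  ext i j
  rw [Matrix.sub_apply, diagonal_mul, mul_diagonal]
  fin_cases i <;> fin_cases j <;> simp <;> ring

theorem l2_opNorm_skew_path3 (x y : ℝ) :
    ‖!![0, x, 0; -x, 0, y; 0, -y, 0]‖ = √(x ^ 2 + y ^ 2) := by
  set T := toEuclideanCLM (n := Fin 3) (𝕜 := ℝ) !![0, x, 0; -x, 0, y; 0, -y, 0]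
  rw [← l2_opNorm_toEuclideanCLM]
  refine le_antisymm (T.opNorm_le_bound (Real.sqrt_nonneg _) fun v ↦ ?_) ?_
  · have hsq : ‖T v‖ ^ 2 ≤ (x ^ 2 + y ^ 2) * ‖v‖ ^ 2 := by
      simp only [T, EuclideanSpace.norm_sq_eq, ofLp_toEuclideanCLM, mulVec, dotProduct, of_apply,
        cons_val', cons_val_fin_one, Fin.sum_univ_three, cons_val_zero, cons_val_one, cons_val,
        Real.norm_eq_abs, sq_abs, zero_mul, zero_add, add_zero, neg_mul, even_two, Even.neg_pow]
      -- the gap is exactly `(y v₀ + x v₂)²`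
      nlinarith [sq_nonneg (y * v 0 + x * v 2)]
    rw [← Real.sqrt_sq (norm_nonneg (T v)), ← Real.sqrt_sq (norm_nonneg v),
      ← Real.sqrt_mul (by positivity)]
    exact Real.sqrt_le_sqrt hsq
  · have hT : ‖T (EuclideanSpace.single 1 1)‖ = √(x ^ 2 + y ^ 2) := by
      simp [T, EuclideanSpace.norm_eq, Fin.sum_univ_three, mulVec, dotProduct]
    simpa [hT] using T.le_opNorm (EuclideanSpace.single 1 1)

theorem norm_diagonal_mul_sub_mul_diagonal_path3 (a : Fin 3 → ℝ) (d₁ d₂ : ℝ) :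
    ‖diagonal a * !![0, d₁, 0; d₁, 0, d₂; 0, d₂, 0]
        - !![0, d₁, 0; d₁, 0, d₂; 0, d₂, 0] * diagonal a‖
      = √(((a 0 - a 1) * d₁) ^ 2 + ((a 1 - a 2) * d₂) ^ 2) := by
  rw [diagonal_mul_sub_mul_diagonal_path3, l2_opNorm_skew_path3]

section

variable {d₁ d₂ : ℝ}

theorem one_div_mul_sqrt_one_add_div_sq (h₂ : 0 < d₂) :
    1 / d₁ * √(1 + (d₁ / d₂) ^ 2) = √(d₁ ^ 2 + d₂ ^ 2) / (d₁ * d₂) := by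
  have h : 1 + (d₁ / d₂) ^ 2 = (d₁ ^ 2 + d₂ ^ 2) / d₂ ^ 2 := by
    field_simp
    ring
  rw [h, Real.sqrt_div' _ (sq_nonneg _), Real.sqrt_sq h₂.le]
  ring

theorem sqrt_inv_sq_add_inv_sq (h₁ : 0 < d₁) (h₂ : 0 < d₂) :
    √(d₁⁻¹ ^ 2 + d₂⁻¹ ^ 2) = √(d₁ ^ 2 + d₂ ^ 2) / (d₁ * d₂) := by
  have h : d₁⁻¹ ^ 2 + d₂⁻¹ ^ 2 = (d₁ ^ 2 + d₂ ^ 2) / (d₁ * d₂) ^ 2 := by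
    field_simp
    ring
  rw [h, Real.sqrt_div' _ (sq_nonneg _), Real.sqrt_sq (by positivity)]

theorem sub_le_of_norm_commutator_path3_le_one (h₁ : 0 < d₁) (h₂ : 0 < d₂) {a : Fin 3 → ℝ}
    (ha : ‖diagonal a * !![0, d₁, 0; d₁, 0, d₂; 0, d₂, 0]
      - !![0, d₁, 0; d₁, 0, d₂; 0, d₂, 0] * diagonal a‖ ≤ 1) :
    a 0 - a 2 ≤ √(d₁ ^ 2 + d₂ ^ 2) / (d₁ * d₂) := by
  rw [norm_diagonal_mul_sub_mul_diagonal_path3] at ha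
  set x := (a 0 - a 1) * d₁
  set y := (a 1 - a 2) * d₂
  calc a 0 - a 2 = x * d₁⁻¹ + y * d₂⁻¹ := by
        simp only [x, y]
        field_simp
        ring
    _ ≤ √(x ^ 2 + y ^ 2) * √(d₁⁻¹ ^ 2 + d₂⁻¹ ^ 2) := by
        simpa [Fin.sum_univ_two] using
          Real.sum_mul_le_sqrt_mul_sqrt Finset.univ ![x, y] ![d₁⁻¹, d₂⁻¹]
    _ ≤ √(d₁⁻¹ ^ 2 + d₂⁻¹ ^ 2) := mul_le_of_le_one_left (Real.sqrt_nonneg _) ha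
    _ = √(d₁ ^ 2 + d₂ ^ 2) / (d₁ * d₂) := sqrt_inv_sq_add_inv_sq h₁ h₂

theorem exists_norm_commutator_path3_le_one (h₁ : 0 < d₁) (h₂ : 0 < d₂) :
    ∃ a : Fin 3 → ℝ,
      ‖diagonal a * !![0, d₁, 0; d₁, 0, d₂; 0, d₂, 0]
        - !![0, d₁, 0; d₁, 0, d₂; 0, d₂, 0] * diagonal a‖ ≤ 1
      ∧ a 0 - a 1 = d₂ / (d₁ * √(d₁ ^ 2 + d₂ ^ 2))
      ∧ a 1 - a 2 = d₁ / (d₂ * √(d₁ ^ 2 + d₂ ^ 2))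
      ∧ a 0 - a 2 = √(d₁ ^ 2 + d₂ ^ 2) / (d₁ * d₂) := by
  set s := √(d₁ ^ 2 + d₂ ^ 2)
  have hs : 0 < s := Real.sqrt_pos.mpr (by positivity)
  have hs2 : s ^ 2 = d₁ ^ 2 + d₂ ^ 2 := Real.sq_sqrt (by positivity)
  set a : Fin 3 → ℝ := ![d₂ / (d₁ * s) + d₁ / (d₂ * s), d₁ / (d₂ * s), 0]
  have hx : (a 0 - a 1) * d₁ = d₂ / s := by
    simp only [a, cons_val_zero, cons_val_one]
    field_simp
    ring
  have hy : (a 1 - a 2) * d₂ = d₁ / s := by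
    simp only [a, cons_val_zero, cons_val_one, cons_val_two, tail_cons, head_cons]
    field_simp
    ring
  have hunit : (d₂ / s) ^ 2 + (d₁ / s) ^ 2 = 1 := by
    field_simp
    linear_combination -hs2
  refine ⟨a, ?_, by simp [a], by simp [a], ?_⟩
  · rw [norm_diagonal_mul_sub_mul_diagonal_path3, hx, hy, hunit, Real.sqrt_one]
  · simp only [a, cons_val_zero, cons_val_two, tail_cons, head_cons]
    field_simp
    linear_combination -hs2

end

/-- For the path on 3 vertices with weights `d₁, d₂ > 0`, the noncommutative distance
`max{a₁ − a₃ : ‖AD − DA‖ ≤ 1}` equals `(1/d₁)√(1 + (d₁/d₂)²) = √(d₁² + d₂²)/(d₁d₂)`,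
attained at `a₁ − a₂ = d₂/(d₁√(d₁²+d₂²))`, `a₂ − a₃ = d₁/(d₂√(d₁²+d₂²))`. -/
theorem path3_distance (d₁ d₂ : ℝ) (h₁ : 0 < d₁) (h₂ : 0 < d₂)
    (D : Matrix (Fin 3) (Fin 3) ℝ)
    (hD : D = !![0, d₁, 0; d₁, 0, d₂; 0, d₂, 0]) :
    (1 / d₁) * Real.sqrt (1 + (d₁ / d₂) ^ 2) = Real.sqrt (d₁ ^ 2 + d₂ ^ 2) / (d₁ * d₂)
    ∧ IsGreatest {r : ℝ | ∃ a : Fin 3 → ℝ,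
        ‖Matrix.diagonal a * D - D * Matrix.diagonal a‖ ≤ 1 ∧ r = a 0 - a 2}
      (Real.sqrt (d₁ ^ 2 + d₂ ^ 2) / (d₁ * d₂))
    ∧ ∃ a : Fin 3 → ℝ,
        ‖Matrix.diagonal a * D - D * Matrix.diagonal a‖ ≤ 1
        ∧ a 0 - a 1 = d₂ / (d₁ * Real.sqrt (d₁ ^ 2 + d₂ ^ 2))
        ∧ a 1 - a 2 = d₁ / (d₂ * Real.sqrt (d₁ ^ 2 + d₂ ^ 2))
        ∧ a 0 - a 2 = Real.sqrt (d₁ ^ 2 + d₂ ^ 2) / (d₁ * d₂) := by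
  subst hD
  obtain ⟨a, ha, ha01, ha12, ha02⟩ := exists_norm_commutator_path3_le_one h₁ h₂
  refine ⟨one_div_mul_sqrt_one_add_div_sq h₂, ⟨⟨a, ha, ha02.symm⟩, ?_⟩, a, ha, ha01, ha12, ha02⟩
  rintro r ⟨b, hb, rfl⟩
  exact sub_le_of_norm_commutator_path3_le_one h₁ h₂ hb
end

section
/- Let n = 2k be even and let L(z) ∈ M_n(ℝ) be the symmetric tridiagonal matrix with zero diagonal and superdiagonal z_1, …, z_{n-1} (all weights d_j = 1). Then max{z_1 + ⋯ + z_{n-1} : z_j ≥ 0, ‖L(z)‖ ≤ 1} = k, attained at z with z_j = 1 for j odd and z_j = 0 for j even. -/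
open Matrix
open scoped Matrix.Norms.L2Operator

/-!
Pairing the all-ones vector `𝟙` with `L(z) 𝟙` gives `2 (z₁ + ⋯ + z_{n-1}) = ⟪𝟙, L(z) 𝟙⟫ ≤ ‖L(z)‖ ‖𝟙‖² ≤ n`,
so the sum is at most `k`. At the odd indicator, `L(z)` is the permutation matrix of the involution
`2m ↔ 2m + 1`, which has norm at most `1` and `n` entries equal to `1`, so the bound is attained.
-/

theorem sum_entries_le_l2_opNorm_mul_card {n : Type*} [Fintype n] [DecidableEq n]
    (A : Matrix n n ℝ) : ∑ i, ∑ j, A i j ≤ ‖A‖ * Fintype.card n := by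
  set v : EuclideanSpace ℝ n := WithLp.toLp 2 fun _ => 1
  have hv : ‖v‖ ^ 2 = Fintype.card n := by simp [v, EuclideanSpace.norm_sq_eq]
  calc ∑ i, ∑ j, A i j = inner ℝ ((EuclideanSpace.equiv n ℝ).symm (A *ᵥ v)) v := by
        simp [v, mulVec, dotProduct, PiLp.inner_apply]
    _ ≤ ‖(EuclideanSpace.equiv n ℝ).symm (A *ᵥ v)‖ * ‖v‖ := real_inner_le_norm _ _
    _ ≤ ‖A‖ * ‖v‖ * ‖v‖ := by gcongr; exact A.l2_opNorm_mulVec v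
    _ = ‖A‖ * Fintype.card n := by rw [mul_assoc, ← sq, hv]

theorem sum_entries_permMatrix {n : Type*} [Fintype n] [DecidableEq n] (σ : Equiv.Perm n) :
    ∑ i, ∑ j, σ.permMatrix ℝ i j = Fintype.card n := by
  simp [PEquiv.toMatrix_apply]

def weightedPathMatrix (n : ℕ) (z : ℕ → ℝ) : Matrix (Fin n) (Fin n) ℝ :=
  Matrix.of fun i j : Fin n =>
    if (i : ℕ) + 1 = (j : ℕ) then z ((i : ℕ) + 1)
    else if (j : ℕ) + 1 = (i : ℕ) then z ((j : ℕ) + 1) else 0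

theorem sum_fin_ite_succ_lt_eq_sum_Icc (n : ℕ) (z : ℕ → ℝ) :
    ∑ i : Fin n, (if (i : ℕ) + 1 < n then z ((i : ℕ) + 1) else 0)
      = ∑ i ∈ Finset.Icc 1 (n - 1), z i := by
  rw [Fin.sum_univ_eq_sum_range (fun i => if i + 1 < n then z (i + 1) else 0), ← Finset.sum_filter]
  have hfilter : (Finset.range n).filter (fun i => i + 1 < n) = Finset.Ico 0 (n - 1) := by
    ext; simp only [Finset.mem_filter, Finset.mem_range, Nat.Ico_zero_eq_range]; omega
  have hIcc : Finset.Icc 1 (n - 1) = Finset.Ico (0 + 1) (n - 1 + 1) := by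
    ext; simp
  rw [hfilter, hIcc, Finset.sum_Ico_add']

theorem sum_entries_weightedPathMatrix (n : ℕ) (z : ℕ → ℝ) :
    ∑ i, ∑ j, weightedPathMatrix n z i j = 2 * ∑ i ∈ Finset.Icc 1 (n - 1), z i := by
  have hsplit : ∀ i j : Fin n, weightedPathMatrix n z i j
      = (if (i : ℕ) + 1 = j then z ((i : ℕ) + 1) else 0)
        + (if (j : ℕ) + 1 = i then z ((j : ℕ) + 1) else 0) := by
    intro i j
    simp only [weightedPathMatrix, of_apply]
    split_ifs <;> first | omega | ring
  have hupper : ∑ i : Fin n, ∑ j : Fin n, (if (i : ℕ) + 1 = j then z ((i : ℕ) + 1) else 0)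
      = ∑ i ∈ Finset.Icc 1 (n - 1), z i := by
    rw [← sum_fin_ite_succ_lt_eq_sum_Icc]
    refine Finset.sum_congr rfl fun i _ => ?_
    rw [Fin.sum_univ_eq_sum_range (fun j => if (i : ℕ) + 1 = j then z ((i : ℕ) + 1) else 0),
      Finset.sum_ite_eq]
    simp only [Finset.mem_range]
  simp only [hsplit, Finset.sum_add_distrib]
  rw [Finset.sum_comm (f := fun i j : Fin n => if (j : ℕ) + 1 = i then z ((j : ℕ) + 1) else 0),
    hupper, two_mul]

def pairSwapFun (k : ℕ) (i : Fin (2 * k)) : Fin (2 * k) :=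
  if h : Even (i : ℕ) then ⟨i + 1, by obtain ⟨m, hm⟩ := h; omega⟩ else ⟨i - 1, by omega⟩

theorem val_pairSwapFun (k : ℕ) (i : Fin (2 * k)) :
    (pairSwapFun k i : ℕ) = if Even (i : ℕ) then (i : ℕ) + 1 else (i : ℕ) - 1 := by
  unfold pairSwapFun; split_ifs <;> rfl

theorem pairSwapFun_involutive (k : ℕ) : Function.Involutive (pairSwapFun k) := by
  intro i
  ext
  simp only [val_pairSwapFun, Nat.even_iff]
  split_ifs <;> omega

def pairSwap (k : ℕ) : Equiv.Perm (Fin (2 * k)) := (pairSwapFun_involutive k).toPerm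

theorem weightedPathMatrix_odd_eq_permMatrix (k : ℕ) :
    weightedPathMatrix (2 * k) (fun i => if Odd i then 1 else 0) = (pairSwap k).permMatrix ℝ := by
  ext i j
  simp only [weightedPathMatrix, of_apply, PEquiv.toMatrix_apply, Equiv.toPEquiv_apply,
    Option.mem_def, Option.some.injEq, pairSwap, Function.Involutive.coe_toPerm, Fin.ext_iff,
    val_pairSwapFun, Nat.odd_iff, Nat.even_iff]
  split_ifs <;> first | rfl | omega

theorem two_mul_sum_le_of_norm_weightedPathMatrix_le_one {n : ℕ} {z : ℕ → ℝ}
    (hz : ‖weightedPathMatrix n z‖ ≤ 1) : 2 * ∑ i ∈ Finset.Icc 1 (n - 1), z i ≤ n := by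
  have h := sum_entries_le_l2_opNorm_mul_card (weightedPathMatrix n z)
  rw [sum_entries_weightedPathMatrix, Fintype.card_fin] at h
  nlinarith [(Nat.cast_nonneg n : (0 : ℝ) ≤ n)]

theorem sum_Icc_odd_indicator (k : ℕ) :
    ∑ i ∈ Finset.Icc 1 (2 * k - 1), (if Odd i then (1 : ℝ) else 0) = k := by
  have h := sum_entries_weightedPathMatrix (2 * k) (fun i => if Odd i then 1 else 0)
  rw [weightedPathMatrix_odd_eq_permMatrix, sum_entries_permMatrix, Fintype.card_fin] at h
  push_cast at h
  linarith

theorem uniform_even_path_distance_general (k : ℕ)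
    (L : (ℕ → ℝ) → Matrix (Fin (2 * k)) (Fin (2 * k)) ℝ)
    (hL : L = fun z => Matrix.of fun i j : Fin (2 * k) =>
      if (i : ℕ) + 1 = (j : ℕ) then z ((i : ℕ) + 1)
      else if (j : ℕ) + 1 = (i : ℕ) then z ((j : ℕ) + 1) else 0) :
    IsGreatest {s : ℝ | ∃ z : ℕ → ℝ,
        (∀ i ∈ Finset.Icc 1 (2 * k - 1), 0 ≤ z i) ∧ ‖L z‖ ≤ 1 ∧
        s = ∑ i ∈ Finset.Icc 1 (2 * k - 1), z i} (k : ℝ)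
    ∧ ((∀ i ∈ Finset.Icc 1 (2 * k - 1), 0 ≤ (if Odd i then (1 : ℝ) else 0)) ∧
        ‖L (fun i => if Odd i then (1 : ℝ) else 0)‖ ≤ 1 ∧
        (k : ℝ) = ∑ i ∈ Finset.Icc 1 (2 * k - 1), (if Odd i then (1 : ℝ) else 0)) := by
  have hLz : ∀ z, L z = weightedPathMatrix (2 * k) z := fun z => by subst hL; rfl
  have hnonneg : ∀ i ∈ Finset.Icc 1 (2 * k - 1), 0 ≤ (if Odd i then (1 : ℝ) else 0) :=
    fun i _ => by split_ifs <;> norm_num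
  have hnorm : ‖L (fun i => if Odd i then (1 : ℝ) else 0)‖ ≤ 1 := by
    rw [hLz, weightedPathMatrix_odd_eq_permMatrix]
    exact permMatrix_l2_opNorm_le _
  have hsum := (sum_Icc_odd_indicator k).symm
  refine ⟨⟨⟨_, hnonneg, hnorm, hsum⟩, ?_⟩, hnonneg, hnorm, hsum⟩
  rintro _ ⟨z, -, hz, rfl⟩
  rw [hLz] at hz
  have h := two_mul_sum_le_of_norm_weightedPathMatrix_le_one hz
  push_cast at h
  linarith

/-- Uniform-weight even path: for `n = 2k`, the maximum of `z₁ + ⋯ + z_{n-1}` over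
nonnegative `z` with `‖L(z)‖ ≤ 1` (where `L(z)` is symmetric tridiagonal with zero
diagonal and superdiagonal `z₁, …, z_{n-1}`, 1-indexed) equals `k`, attained at
`z_j = 1` for `j` odd and `z_j = 0` for `j` even. -/
theorem uniform_even_path_distance (k : ℕ) (hk : 0 < k)
    (L : (ℕ → ℝ) → Matrix (Fin (2 * k)) (Fin (2 * k)) ℝ)
    (hL : L = fun z => Matrix.of fun i j : Fin (2 * k) =>
      if (i : ℕ) + 1 = (j : ℕ) then z ((i : ℕ) + 1)
      else if (j : ℕ) + 1 = (i : ℕ) then z ((j : ℕ) + 1) else 0) :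
    IsGreatest {s : ℝ | ∃ z : ℕ → ℝ,
        (∀ i ∈ Finset.Icc 1 (2 * k - 1), 0 ≤ z i) ∧ ‖L z‖ ≤ 1 ∧
        s = ∑ i ∈ Finset.Icc 1 (2 * k - 1), z i} (k : ℝ)
    ∧ ((∀ i ∈ Finset.Icc 1 (2 * k - 1), 0 ≤ (if Odd i then (1 : ℝ) else 0)) ∧
        ‖L (fun i => if Odd i then (1 : ℝ) else 0)‖ ≤ 1 ∧
        (k : ℝ) = ∑ i ∈ Finset.Icc 1 (2 * k - 1), (if Odd i then (1 : ℝ) else 0)) :=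
  uniform_even_path_distance_general k L hL
end

section
/- Let d_1, d_2, d_3 > 0 with d_2² > d_1 d_3, and let D ∈ M_4(ℝ) be symmetric tridiagonal with zero diagonal and superdiagonal (d_1, d_2, d_3). Then max{a_1 − a_4 : A = diag(a_1,…,a_4), ‖AD − DA‖ ≤ 1} = 1/d_1 + 1/d_3. -/
open Matrix
open scoped Matrix.Norms.L2Operator

/-!
Writing `tₖ = (aₖ₋₁ - aₖ) dₖ`, the commutator `AD - DA` is the skew tridiagonal matrix with
superdiagonal `(t₁, t₂, t₃)` and `a₁ - a₄ = t₁/d₁ + t₂/d₂ + t₃/d₃`. Testing `‖AD - DA‖ ≤ 1` on three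
vectors gives `t₁², t₃² ≤ 1` and `t₂² ≤ (1 - t₁²)(1 - t₃²) ≤ 4(1 - t₁)(1 - t₃)`, so AM-GM together
with `d₁d₃ ≤ d₂²` yields `t₂/d₂ ≤ (1 - t₁)/d₁ + (1 - t₃)/d₃`. Equality holds at `t = (1, 0, 1)`,
where the commutator is orthogonal.
-/

lemma Matrix.diagonal_mul_sub_mul_diagonal_apply {ι R : Type*} [Fintype ι] [DecidableEq ι]
    [CommRing R] (a : ι → R) (M : Matrix ι ι R) (i j : ι) :
    (diagonal a * M - M * diagonal a) i j = (a i - a j) * M i j := by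
  rw [sub_apply, diagonal_mul, mul_diagonal]; ring

lemma Matrix.sum_sq_mulVec_le_of_l2_opNorm_le_one {ι : Type*} [Fintype ι] [DecidableEq ι]
    {C : Matrix ι ι ℝ} (hC : ‖C‖ ≤ 1) (v : ι → ℝ) :
    ∑ i, (C *ᵥ v) i ^ 2 ≤ ∑ i, v i ^ 2 := by
  have h := C.l2_opNorm_mulVec (WithLp.toLp 2 v)
  have h' : ‖(EuclideanSpace.equiv ι ℝ).symm (C *ᵥ v)‖ ≤ ‖WithLp.toLp 2 v‖ :=
    h.trans (mul_le_of_le_one_left (norm_nonneg _) hC)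
  have := pow_le_pow_left₀ (norm_nonneg _) h' 2
  simpa [EuclideanSpace.norm_sq_eq] using this

def path4Skew (t₁ t₂ t₃ : ℝ) : Matrix (Fin 4) (Fin 4) ℝ :=
  !![0, t₁, 0, 0; -t₁, 0, t₂, 0; 0, -t₂, 0, t₃; 0, 0, -t₃, 0]

lemma diagonal_commutator_path4 (a : Fin 4 → ℝ) (d₁ d₂ d₃ : ℝ) :
    diagonal a * !![0, d₁, 0, 0; d₁, 0, d₂, 0; 0, d₂, 0, d₃; 0, 0, d₃, 0]
      - !![0, d₁, 0, 0; d₁, 0, d₂, 0; 0, d₂, 0, d₃; 0, 0, d₃, 0] * diagonal a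
      = path4Skew ((a 0 - a 1) * d₁) ((a 1 - a 2) * d₂) ((a 2 - a 3) * d₃) := by
  ext i j
  rw [diagonal_mul_sub_mul_diagonal_apply]
  fin_cases i <;> fin_cases j <;> simp [path4Skew] <;> ring

lemma path4Skew_mulVec (t₁ t₂ t₃ x₀ x₁ x₂ x₃ : ℝ) :
    path4Skew t₁ t₂ t₃ *ᵥ ![x₀, x₁, x₂, x₃]
      = ![t₁ * x₁, -t₁ * x₀ + t₂ * x₂, -t₂ * x₁ + t₃ * x₃, -t₃ * x₂] := by
  ext i; fin_cases i <;> simp [path4Skew, mulVec, dotProduct, Fin.sum_univ_four]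

lemma sq_le_of_norm_path4Skew_le_one {t₁ t₂ t₃ : ℝ} (h : ‖path4Skew t₁ t₂ t₃‖ ≤ 1) :
    t₁ ^ 2 ≤ 1 ∧ t₃ ^ 2 ≤ 1 ∧ t₂ ^ 2 ≤ (1 - t₁ ^ 2) * (1 - t₃ ^ 2) := by
  have contract := fun x₀ x₁ x₂ x₃ : ℝ ↦ by
    simpa [path4Skew_mulVec, Fin.sum_univ_four] using
      sum_sq_mulVec_le_of_l2_opNorm_le_one h ![x₀, x₁, x₂, x₃]
  have h₁ : t₁ ^ 2 + t₂ ^ 2 ≤ 1 := by linarith [contract 0 1 0 0]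
  have h₂ : t₂ ^ 2 + t₃ ^ 2 ≤ 1 := by linarith [contract 0 0 1 0]
  -- `(-t₁t₂, 0, 1 - t₁², 0)` is mapped to `(0, t₂, 0, -t₃(1 - t₁²))`
  have h₃ : (1 - t₁ ^ 2) * t₂ ^ 2 ≤ (1 - t₁ ^ 2) * ((1 - t₁ ^ 2) * (1 - t₃ ^ 2)) := by
    linarith [contract (-(t₁ * t₂)) 0 (1 - t₁ ^ 2) 0]
  refine ⟨by nlinarith, by nlinarith, ?_⟩
  rcases (show 0 ≤ 1 - t₁ ^ 2 by nlinarith).eq_or_lt with hs | hs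
  · nlinarith
  · exact le_of_mul_le_mul_left h₃ hs

lemma sq_le_four_mul_of_sq_le_mul {t₁ t₂ t₃ : ℝ} (h₁ : t₁ ^ 2 ≤ 1) (h₃ : t₃ ^ 2 ≤ 1)
    (h : t₂ ^ 2 ≤ (1 - t₁ ^ 2) * (1 - t₃ ^ 2)) : t₂ ^ 2 ≤ 4 * ((1 - t₁) * (1 - t₃)) := by
  obtain ⟨ht₁, ht₁'⟩ := abs_le.mp ((sq_le_one_iff_abs_le_one t₁).mp h₁)
  obtain ⟨ht₃, ht₃'⟩ := abs_le.mp ((sq_le_one_iff_abs_le_one t₃).mp h₃)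
  calc t₂ ^ 2 ≤ (1 - t₁ ^ 2) * (1 - t₃ ^ 2) := h
    _ = ((1 + t₁) * (1 + t₃)) * ((1 - t₁) * (1 - t₃)) := by ring
    _ ≤ 4 * ((1 - t₁) * (1 - t₃)) := by
      gcongr
      nlinarith

lemma div_le_div_add_div_of_sq_le_four_mul {p q t d₁ d₂ d₃ : ℝ} (hp : 0 ≤ p) (hq : 0 ≤ q)
    (h₁ : 0 < d₁) (h₃ : 0 < d₃) (hd : d₁ * d₃ ≤ d₂ ^ 2)
    (ht : t ^ 2 ≤ 4 * (p * q)) : t / d₂ ≤ p / d₁ + q / d₃ := by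
  refine le_of_sq_le_sq ?_ (by positivity)
  calc (t / d₂) ^ 2 = t ^ 2 / d₂ ^ 2 := div_pow t d₂ 2
    _ ≤ 4 * (p * q) / (d₁ * d₃) := div_le_div₀ (by positivity) ht (by positivity) hd
    _ = 4 * (p / d₁) * (q / d₃) := by field_simp
    _ ≤ (p / d₁ + q / d₃) ^ 2 := four_mul_le_sq_add _ _

lemma norm_path4Skew_one_zero_one : ‖path4Skew 1 0 1‖ = 1 := by
  refine CStarRing.norm_of_mem_unitary (mem_unitaryGroup_iff.mpr ?_)
  ext i j; fin_cases i <;> fin_cases j <;> simp [path4Skew, mul_apply, Fin.sum_univ_four]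

lemma add_div_add_div_le_of_norm_path4Skew_le_one {t₁ t₂ t₃ d₁ d₂ d₃ : ℝ}
    (h₁ : 0 < d₁) (h₃ : 0 < d₃) (hd : d₁ * d₃ ≤ d₂ ^ 2) (h : ‖path4Skew t₁ t₂ t₃‖ ≤ 1) :
    t₁ / d₁ + t₂ / d₂ + t₃ / d₃ ≤ 1 / d₁ + 1 / d₃ := by
  obtain ⟨ht₁, ht₃, ht₂⟩ := sq_le_of_norm_path4Skew_le_one h
  have hp : 0 ≤ 1 - t₁ := sub_nonneg.2 (abs_le.mp ((sq_le_one_iff_abs_le_one t₁).mp ht₁)).2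
  have hq : 0 ≤ 1 - t₃ := sub_nonneg.2 (abs_le.mp ((sq_le_one_iff_abs_le_one t₃).mp ht₃)).2
  have := div_le_div_add_div_of_sq_le_four_mul hp hq h₁ h₃ hd
    (sq_le_four_mul_of_sq_le_mul ht₁ ht₃ ht₂)
  rw [sub_div, sub_div] at this
  linarith

/-- For the path on 4 vertices with weights `d₁, d₂, d₃ > 0` satisfying `d₂² > d₁d₃`,
the noncommutative distance `max{a₁ − a₄ : ‖AD − DA‖ ≤ 1}` equals `1/d₁ + 1/d₃`. -/
theorem path4_distance_reducible (d₁ d₂ d₃ : ℝ)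
    (h₁ : 0 < d₁) (h₂ : 0 < d₂) (h₃ : 0 < d₃) (hcond : d₂ ^ 2 > d₁ * d₃)
    (D : Matrix (Fin 4) (Fin 4) ℝ)
    (hD : D = !![0, d₁, 0, 0; d₁, 0, d₂, 0; 0, d₂, 0, d₃; 0, 0, d₃, 0]) :
    IsGreatest {r : ℝ | ∃ a : Fin 4 → ℝ,
        ‖Matrix.diagonal a * D - D * Matrix.diagonal a‖ ≤ 1 ∧ r = a 0 - a 3}
      (1 / d₁ + 1 / d₃) := by
  subst hD
  refine ⟨⟨![1 / d₁ + 1 / d₃, 1 / d₃, 1 / d₃, 0], ?_, ?_⟩, ?_⟩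
  · rw [diagonal_commutator_path4]
    refine (Eq.trans ?_ norm_path4Skew_one_zero_one).le
    congr 2 <;> simp [h₁.ne', h₃.ne']
  · simp
  · rintro _ ⟨a, ha, rfl⟩
    rw [diagonal_commutator_path4] at ha
    convert add_div_add_div_le_of_norm_path4Skew_le_one h₁ h₃ hcond.le ha using 1
    field_simp
    ring
end

section
/- Let d_1, d_2, d_3 > 0 with d_2² ≤ d_1 d_3, and let D ∈ M_4(ℝ) be symmetric tridiagonal with zero diagonal and superdiagonal (d_1, d_2, d_3). Then max{a_1 − a_4 : A = diag(a_1,…,a_4), ‖AD − DA‖ ≤ 1} = (1/d_1)·√(1 + (d_1/d_2)²)·√(1 + (d_2/d_3)²). -/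
/-!
The commutator `C = diagonal a * D - D * diagonal a` is the skew-symmetric tridiagonal matrix with
superdiagonal `c = ((a 0 - a 1) d₁, (a 1 - a 2) d₂, (a 2 - a 3) d₃)`, and
`a 0 - a 3 = c₁ / d₁ + c₂ / d₂ + c₃ / d₃ = x ⬝ᵥ C y` for `x = (1/d₁, 0, -1/d₂, 0)` and
`y = (0, 1, 0, -d₂/d₃)`. Cauchy–Schwarz bounds this by `‖x‖ ‖C‖ ‖y‖ ≤ ‖μ‖ ‖ν‖ / d₁`, where
`μ = (1, d₁/d₂)` and `ν = (1, d₂/d₃)`.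

For the equality case, `C` maps the even coordinates to the odd ones and back by two triangular
`2 × 2` blocks, each of which is a contraction as soon as `c₁², c₃² ≤ 1` and
`c₂² = (1 - c₁²)(1 - c₃²)`. Taking `c₁ = ‖ν‖ / ‖μ‖`, which needs `‖ν‖ ≤ ‖μ‖`, i.e. `d₂² ≤ d₁ d₃`,
the remaining two entries can be chosen to make the Cauchy–Schwarz step tight.
-/

open scoped Matrix.Norms.L2Operator

namespace Matrix

variable {n : Type*} [Fintype n] [DecidableEq n]

lemma dotProduct_mulVec_le_l2_opNorm (A : Matrix n n ℝ) (x y : EuclideanSpace ℝ n) :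
    x.ofLp ⬝ᵥ A *ᵥ y.ofLp ≤ ‖x‖ * ‖A‖ * ‖y‖ := by
  rw [← inner_toEuclideanCLM, ← l2_opNorm_toEuclideanCLM, mul_assoc]
  exact (real_inner_le_norm _ _).trans
    (by gcongr; exact (toEuclideanCLM (𝕜 := ℝ) A).le_opNorm y)

lemma l2_opNorm_le_one_of_sum_sq_mulVec_le (A : Matrix n n ℝ)
    (h : ∀ w : n → ℝ, ∑ i, (A *ᵥ w) i ^ 2 ≤ ∑ i, w i ^ 2) : ‖A‖ ≤ 1 := by
  rw [← l2_opNorm_toEuclideanCLM]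
  refine (toEuclideanCLM (𝕜 := ℝ) A).opNorm_le_bound zero_le_one fun x => ?_
  rw [one_mul, EuclideanSpace.norm_eq, EuclideanSpace.norm_eq]
  exact Real.sqrt_le_sqrt (by simpa using h x.ofLp)

lemma diagonal_mul_sub_mul_diagonal_apply_s18 {α : Type*} [CommRing α] (a : n → α)
    (D : Matrix n n α) (i j : n) :
    (diagonal a * D - D * diagonal a) i j = (a i - a j) * D i j := by
  rw [sub_apply, diagonal_mul, mul_diagonal]
  ring

end Matrix

open Matrix

lemma sq_add_sq_le_sq_add_sq {p q r : ℝ} (hp : p ^ 2 ≤ 1) (hr : r ^ 2 ≤ 1)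
    (hq : q ^ 2 = (1 - p ^ 2) * (1 - r ^ 2)) (u v : ℝ) :
    (p * u + q * v) ^ 2 + (r * v) ^ 2 ≤ u ^ 2 + v ^ 2 := by
  rcases hp.lt_or_eq with hp | hp
  · have key : (1 - p ^ 2) * (u ^ 2 + v ^ 2 - (p * u + q * v) ^ 2 - (r * v) ^ 2)
        = ((1 - p ^ 2) * u - p * q * v) ^ 2 := by
      linear_combination (-v ^ 2) * hq
    nlinarith [sq_nonneg ((1 - p ^ 2) * u - p * q * v)]
  · obtain rfl : q = 0 := by simpa [hp] using hq
    nlinarith [mul_nonneg (sq_nonneg v) (sub_nonneg.2 hr)]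

def pathMatrix4 (d₁ d₂ d₃ : ℝ) : Matrix (Fin 4) (Fin 4) ℝ :=
  !![0, d₁, 0, 0; d₁, 0, d₂, 0; 0, d₂, 0, d₃; 0, 0, d₃, 0]

def skewPathMatrix4 (c₁ c₂ c₃ : ℝ) : Matrix (Fin 4) (Fin 4) ℝ :=
  !![0, c₁, 0, 0; -c₁, 0, c₂, 0; 0, -c₂, 0, c₃; 0, 0, -c₃, 0]

lemma diagonal_commutator_pathMatrix4 (d₁ d₂ d₃ : ℝ) (a : Fin 4 → ℝ) :
    diagonal a * pathMatrix4 d₁ d₂ d₃ - pathMatrix4 d₁ d₂ d₃ * diagonal a =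
      skewPathMatrix4 ((a 0 - a 1) * d₁) ((a 1 - a 2) * d₂) ((a 2 - a 3) * d₃) := by
  ext i j
  rw [diagonal_mul_sub_mul_diagonal_apply_s18]
  fin_cases i <;> fin_cases j <;> simp [pathMatrix4, skewPathMatrix4] <;> ring

lemma norm_skewPathMatrix4_le_one {c₁ c₂ c₃ : ℝ} (h₁ : c₁ ^ 2 ≤ 1) (h₃ : c₃ ^ 2 ≤ 1)
    (h₂ : c₂ ^ 2 = (1 - c₁ ^ 2) * (1 - c₃ ^ 2)) : ‖skewPathMatrix4 c₁ c₂ c₃‖ ≤ 1 := by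
  refine l2_opNorm_le_one_of_sum_sq_mulVec_le _ fun w => ?_
  have even_block := sq_add_sq_le_sq_add_sq (p := -c₁) (q := c₂) (by rwa [neg_sq]) h₃
    (by rwa [neg_sq]) (w 0) (w 2)
  have odd_block := sq_add_sq_le_sq_add_sq (q := -c₂) h₃ h₁
    (by rw [neg_sq, h₂]; ring) (w 3) (w 1)
  simp only [mulVec, dotProduct, skewPathMatrix4, of_apply, cons_val', cons_val_fin_one,
    Fin.sum_univ_four, cons_val_zero, cons_val_one, cons_val, zero_mul, zero_add, add_zero]
  linarith

lemma sub_le_of_norm_commutator_pathMatrix4_le_one {d₁ d₂ d₃ : ℝ} (h₁ : 0 < d₁) (h₂ : d₂ ≠ 0)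
    (h₃ : d₃ ≠ 0) {a : Fin 4 → ℝ}
    (ha : ‖diagonal a * pathMatrix4 d₁ d₂ d₃ - pathMatrix4 d₁ d₂ d₃ * diagonal a‖ ≤ 1) :
    a 0 - a 3 ≤ 1 / d₁ * √(1 + (d₁ / d₂) ^ 2) * √(1 + (d₂ / d₃) ^ 2) := by
  set x : EuclideanSpace ℝ (Fin 4) := !₂[1 / d₁, 0, -(1 / d₂), 0]
  set y : EuclideanSpace ℝ (Fin 4) := !₂[0, 1, 0, -(d₂ / d₃)]
  have hx : ‖x‖ = 1 / d₁ * √(1 + (d₁ / d₂) ^ 2) := by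
    rw [EuclideanSpace.norm_eq, ← Real.sqrt_sq (one_div_pos.2 h₁).le,
      ← Real.sqrt_mul (by positivity)]
    congr 1
    simp only [x, Real.norm_eq_abs, sq_abs, Fin.sum_univ_four, cons_val_zero, cons_val_one,
      cons_val, ne_eq, OfNat.ofNat_ne_zero, not_false_eq_true, zero_pow, add_zero, neg_sq]
    field_simp
  have hy : ‖y‖ = √(1 + (d₂ / d₃) ^ 2) := by
    simp [EuclideanSpace.norm_eq, y, Fin.sum_univ_four]
  have hxy : a 0 - a 3 = x.ofLp ⬝ᵥ
      (diagonal a * pathMatrix4 d₁ d₂ d₃ - pathMatrix4 d₁ d₂ d₃ * diagonal a) *ᵥ y.ofLp := by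
    rw [diagonal_commutator_pathMatrix4]
    simp only [x, y, skewPathMatrix4, dotProduct, mulVec, of_apply, cons_val',
      cons_val_fin_one, Fin.sum_univ_four, cons_val_zero, cons_val_one, cons_val]
    field_simp
    ring
  calc a 0 - a 3 ≤ ‖x‖ * ‖_‖ * ‖y‖ := hxy.le.trans (dotProduct_mulVec_le_l2_opNorm _ x y)
    _ ≤ ‖x‖ * 1 * ‖y‖ := by gcongr
    _ = _ := by rw [mul_one, hx, hy]

/- Applied with `s = d₁ / d₂`, `t = d₂ / d₃`, for which `c₁ + s c₂ + s t c₃ = d₁ (c₁ / d₁ + c₂ / d₂ +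
c₃ / d₃)`. The witness is the equality case of Cauchy–Schwarz: it makes `C y` parallel to `x`. -/
lemma exists_norm_skewPathMatrix4_le_one_eq {s t : ℝ} (hs : s ≠ 0) (hts : t ^ 2 ≤ s ^ 2) :
    ∃ c₁ c₂ c₃ : ℝ, ‖skewPathMatrix4 c₁ c₂ c₃‖ ≤ 1 ∧
      c₁ + s * c₂ + s * t * c₃ = √(1 + s ^ 2) * √(1 + t ^ 2) := by
  set P := √(1 + s ^ 2)
  set Q := √(1 + t ^ 2)
  have hP : P ^ 2 = 1 + s ^ 2 := Real.sq_sqrt (by positivity)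
  have hQ : Q ^ 2 = 1 + t ^ 2 := Real.sq_sqrt (by positivity)
  have hP0 : 0 < P := Real.sqrt_pos.2 (by positivity)
  have hQ0 : 0 < Q := Real.sqrt_pos.2 (by positivity)
  refine ⟨Q / P, (s ^ 2 - t ^ 2) / (s * P * Q), t * P / (s * Q),
    norm_skewPathMatrix4_le_one ?_ ?_ ?_, ?_⟩
  · rw [div_pow, div_le_one (by positivity)]
    linarith
  · rw [div_pow, div_le_one (by positivity), mul_pow, mul_pow, hP, hQ]
    nlinarith
  · field_simp
    rw [hP, hQ]
    ring
  · field_simp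
    linear_combination (1 - P ^ 2) * hQ - hP

lemma exists_norm_commutator_pathMatrix4_le_one_sub_eq {d₁ d₂ d₃ : ℝ} (h₁ : 0 < d₁)
    (h₂ : 0 < d₂) (h₃ : 0 < d₃) (hcond : d₂ ^ 2 ≤ d₁ * d₃) :
    ∃ a : Fin 4 → ℝ,
      ‖diagonal a * pathMatrix4 d₁ d₂ d₃ - pathMatrix4 d₁ d₂ d₃ * diagonal a‖ ≤ 1 ∧
        a 0 - a 3 = 1 / d₁ * √(1 + (d₁ / d₂) ^ 2) * √(1 + (d₂ / d₃) ^ 2) := by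
  have hts : (d₂ / d₃) ^ 2 ≤ (d₁ / d₂) ^ 2 := by
    rw [div_pow, div_pow, div_le_div_iff₀ (by positivity) (by positivity)]
    nlinarith [mul_le_mul hcond hcond (by positivity) (by positivity)]
  obtain ⟨c₁, c₂, c₃, hc, hsum⟩ :=
    exists_norm_skewPathMatrix4_le_one_eq (div_pos h₁ h₂).ne' hts
  refine ⟨![c₁ / d₁ + c₂ / d₂ + c₃ / d₃, c₂ / d₂ + c₃ / d₃, c₃ / d₃, 0], ?_, ?_⟩
  · rw [diagonal_commutator_pathMatrix4]
    convert hc using 3 <;>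
      simp only [cons_val_zero, cons_val_one, cons_val, add_sub_add_right_eq_sub,
        add_sub_cancel_right, sub_zero] <;>
      field_simp
  · rw [mul_assoc, ← hsum]
    simp only [cons_val_zero, cons_val, sub_zero]
    field_simp

/-- For the path on 4 vertices with weights `d₁, d₂, d₃ > 0` satisfying `d₂² ≤ d₁d₃`,
the noncommutative distance `max{a₁ − a₄ : ‖AD − DA‖ ≤ 1}` equals
`(1/d₁)·√(1 + (d₁/d₂)²)·√(1 + (d₂/d₃)²)`. -/
theorem path4_distance_irreducible (d₁ d₂ d₃ : ℝ)
    (h₁ : 0 < d₁) (h₂ : 0 < d₂) (h₃ : 0 < d₃) (hcond : d₂ ^ 2 ≤ d₁ * d₃)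
    (D : Matrix (Fin 4) (Fin 4) ℝ)
    (hD : D = !![0, d₁, 0, 0; d₁, 0, d₂, 0; 0, d₂, 0, d₃; 0, 0, d₃, 0]) :
    IsGreatest {r : ℝ | ∃ a : Fin 4 → ℝ,
        ‖Matrix.diagonal a * D - D * Matrix.diagonal a‖ ≤ 1 ∧ r = a 0 - a 3}
      ((1 / d₁) * Real.sqrt (1 + (d₁ / d₂) ^ 2) * Real.sqrt (1 + (d₂ / d₃) ^ 2)) := by
  change D = pathMatrix4 d₁ d₂ d₃ at hD
  subst hD
  refine ⟨?_, ?_⟩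
  · obtain ⟨a, ha, hsub⟩ := exists_norm_commutator_pathMatrix4_le_one_sub_eq h₁ h₂ h₃ hcond
    exact ⟨a, ha, hsub.symm⟩
  · rintro r ⟨a, ha, rfl⟩
    exact sub_le_of_norm_commutator_pathMatrix4_le_one h₁ h₂.ne' h₃.ne' ha
end
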